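/- Let (X, μ) be a geodesically connected topological reflection space. Then the transvection group Trans(X, μ) acts transitively on X; in particular X is reflection-homogeneous. -/
import Mathlib


/-- `p` and `q` lie on a common geodesic of the reflection space `(X, mul)`. -/
def OnCommonGeodesic {X : Type*} (mul : X → X → X) (p q : X) : Prop :=
  ∃ φ : ℝ → X, Function.Injective φ ∧
    (∀ a b : ℝ, φ (2 * a - b) = mul (φ a) (φ b)) ∧
    p ∈ Set.range φ ∧ q ∈ Set.range φ

/-- A geodesically connected topological reflection space is reflection-homogeneous:
its transvection group acts transitively. -/
theorem stmt_12 {X : Type*} [TopologicalSpace X] (mul : X → X → X)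
    (hcont : Continuous fun p : X × X => mul p.1 p.2)
    (rs1 : ∀ x, mul x x = x)
    (rs2 : ∀ x y, mul x (mul x y) = y)
    (rs3 : ∀ x y z, mul x (mul y z) = mul (mul x y) (mul x z))
    (s : X → Equiv.Perm X) (hs : ∀ x y, s x y = mul x y)
    (hgc : ∀ p q : X, ∃ (N : ℕ) (c : ℕ → X), c 0 = p ∧ c N = q ∧
      ∀ i < N, OnCommonGeodesic mul (c i) (c (i + 1))) :
    ∀ p q : X,
      ∃ g ∈ Subgroup.closure {g : Equiv.Perm X | ∃ x y : X, g = s x * s y}, g p = q := by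
  intro p q
  obtain ⟨N, c, hc0, hcN, hchain⟩ := hgc p q
  subst hc0; subst hcN
  suffices h : ∀ n, n ≤ N → ∃ g ∈ Subgroup.closure {g : Equiv.Perm X | ∃ x y : X, g = s x * s y},
      g (c 0) = c n from h N le_rfl
  intro n hn
  induction n with
  | zero => exact ⟨1, Subgroup.one_mem _, rfl⟩
  | succ n ih =>
    obtain ⟨g, hg, hgp⟩ := ih (Nat.le_of_succ_le hn)
    obtain ⟨φ, -, hφ, ⟨a, ha⟩, ⟨b, hb⟩⟩ := hchain n (Nat.lt_of_succ_le hn)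
    refine ⟨(s (φ ((a + b) / 2)) * s (c n)) * g,
      Subgroup.mul_mem _ (Subgroup.subset_closure ⟨_, _, rfl⟩) hg, ?_⟩
    have : ((s (φ ((a + b) / 2)) * s (c n)) * g) (c 0)
        = mul (φ ((a + b) / 2)) (mul (c n) (c n)) := by
      simp [Equiv.Perm.mul_apply, hgp, hs]
    rw [this, rs1, ← ha, ← hφ]
    rw [show 2 * ((a + b) / 2) - a = b by ring, hb]
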